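/- If G is a continuous strictly increasing c.d.f. on ℝ with density g and (G_n) is a sequence of (random) distribution functions such that sup_{x∈ℝ} |G_n(x) − G(x)| → 0 in probability, then sup_{u∈(a,b)} |u − G(G_n⁻¹(u))| → 0 in probability for any 0 < a < b < 1, where G_n⁻¹ is the generalized inverse. -/

import Mathlib

/-!
If `|F - G| < δ` everywhere and `G` takes the values `u - δ` and `u + δ` at points `x₁` and `x₂`,
then `x₂` lies in `{x | u ≤ F x}` while no point below `x₁` does, so the generalized inverse
`F⁻¹(u)` lies in `[x₁, x₂]` and `G (F⁻¹ u)` in `[u - δ, u + δ]`. For `u ∈ (a, b)` and `δ` smaller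
than `a` and `1 - b`, both values `u ± δ` lie in `(0, 1) = range G`, so the bound is uniform in `u`
and the event `sup_{u ∈ (a,b)} |u - G (G_n⁻¹ u)| ≥ ε` is contained in `sup_x |G_n x - G x| ≥ δ`.
-/

open MeasureTheory Filter

lemma abs_sub_comp_sInf_le {F G : ℝ → ℝ} (hG : Monotone G) {u δ : ℝ}
    (hlow : ∃ x, G x = u - δ) (hhigh : ∃ x, G x = u + δ) (hFG : ∀ x, |F x - G x| < δ) :
    |u - G (sInf {x | u ≤ F x})| ≤ δ := by
  obtain ⟨x₁, hx₁⟩ := hlow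
  obtain ⟨x₂, hx₂⟩ := hhigh
  have hx₂_mem : u ≤ F x₂ := by
    linarith [(abs_lt.mp (hFG x₂)).1]
  have hx₁_lower : x₁ ∈ lowerBounds {x | u ≤ F x} := by
    intro x hx
    by_contra! hlt
    have : G x ≤ G x₁ := hG hlt.le
    linarith [(abs_lt.mp (hFG x)).2, show u ≤ F x from hx]
  have hle : sInf {x | u ≤ F x} ≤ x₂ := csInf_le ⟨x₁, hx₁_lower⟩ hx₂_mem
  have hge : x₁ ≤ sInf {x | u ≤ F x} := le_csInf ⟨x₂, hx₂_mem⟩ hx₁_lower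
  rw [abs_le]
  constructor <;> linarith [hG hle, hG hge]

lemma exists_pos_forall_abs_sub_comp_sInf_lt {G : ℝ → ℝ} (hG : Monotone G)
    (hG_surj : ∀ u ∈ Set.Ioo (0 : ℝ) 1, ∃ x, G x = u) {a b ε : ℝ} (ha : 0 < a) (hb : b < 1)
    (hε : 0 < ε) :
    ∃ δ > 0, ∀ F : ℝ → ℝ, (∀ x, |F x - G x| < δ) →
      ∀ u ∈ Set.Ioo a b, |u - G (sInf {x | u ≤ F x})| < ε := by
  set δ := min (ε / 2) (min a (1 - b))
  have hδε : δ ≤ ε / 2 := min_le_left _ _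
  have hδa : δ ≤ a := (min_le_right _ _).trans (min_le_left _ _)
  have hδb : δ ≤ 1 - b := (min_le_right _ _).trans (min_le_right _ _)
  have hδ : 0 < δ := by positivity
  refine ⟨δ, hδ, fun F hFG u hu => ?_⟩
  have := abs_sub_comp_sInf_le (u := u) hG
    (hG_surj _ ⟨by linarith [hu.1], by linarith [hu.2]⟩)
    (hG_surj _ ⟨by linarith [hu.1], by linarith [hu.2]⟩) hFG
  linarith

theorem stmt_14_general {Ω : Type*} [MeasurableSpace Ω] (P : Measure Ω)
    (G : ℝ → ℝ) (hG_mono : StrictMono G)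
    (hG_surj : ∀ u ∈ Set.Ioo (0 : ℝ) 1, ∃ x, G x = u)
    (Gn : ℕ → Ω → ℝ → ℝ)
    (Gninv : ℕ → Ω → ℝ → ℝ)
    (hGninv : ∀ n ω u, Gninv n ω u = sInf {x : ℝ | u ≤ Gn n ω x})
    (hconv : ∀ ε > (0 : ℝ),
      Tendsto (fun n : ℕ => P {ω | ∃ x, ε ≤ |Gn n ω x - G x|}) atTop (nhds 0)) :
    ∀ a b : ℝ, 0 < a → a < b → b < 1 →
      ∀ ε > (0 : ℝ), Tendsto (fun n : ℕ =>
        P {ω | ∃ u ∈ Set.Ioo a b, ε ≤ |u - G (Gninv n ω u)|}) atTop (nhds 0) := by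
  intro a b ha _ hb ε hε
  obtain ⟨δ, hδ, hunif⟩ :=
    exists_pos_forall_abs_sub_comp_sInf_lt hG_mono.monotone hG_surj ha hb hε
  have hsubset : ∀ n, {ω | ∃ u ∈ Set.Ioo a b, ε ≤ |u - G (Gninv n ω u)|} ⊆
      {ω | ∃ x, δ ≤ |Gn n ω x - G x|} := by
    intro n ω ⟨u, hu, hεu⟩
    show ∃ x, δ ≤ |Gn n ω x - G x|
    by_contra! hclose
    have := hunif (Gn n ω) hclose u hu
    rw [hGninv] at hεu
    linarith
  exact tendsto_of_tendsto_of_tendsto_of_le_of_le tendsto_const_nhds (hconv δ hδ)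
    (fun _ => zero_le) (fun n => measure_mono (hsubset n))

theorem stmt_14 {Ω : Type*} [MeasurableSpace Ω] (P : Measure Ω) [IsProbabilityMeasure P]
    (G : ℝ → ℝ) (hG_cont : Continuous G) (hG_mono : StrictMono G)
    (hG_range : ∀ x, G x ∈ Set.Ioo (0 : ℝ) 1)
    (hG_surj : ∀ u ∈ Set.Ioo (0 : ℝ) 1, ∃ x, G x = u)
    (Gn : ℕ → Ω → ℝ → ℝ)
    (hGn_mono : ∀ n ω, Monotone (Gn n ω))
    (hGn_range : ∀ n ω x, Gn n ω x ∈ Set.Icc (0 : ℝ) 1)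
    (Gninv : ℕ → Ω → ℝ → ℝ)
    (hGninv : ∀ n ω u, Gninv n ω u = sInf {x : ℝ | u ≤ Gn n ω x})
    (hconv : ∀ ε > (0 : ℝ),
      Tendsto (fun n : ℕ => P {ω | ∃ x, ε ≤ |Gn n ω x - G x|}) atTop (nhds 0)) :
    ∀ a b : ℝ, 0 < a → a < b → b < 1 →
      ∀ ε > (0 : ℝ), Tendsto (fun n : ℕ =>
        P {ω | ∃ u ∈ Set.Ioo a b, ε ≤ |u - G (Gninv n ω u)|}) atTop (nhds 0) :=
  stmt_14_general P G hG_mono hG_surj Gn Gninv hGninv hconv
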